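/- Define SNR(S, R) = Cov(S,R)² / (Var(S)·Var(R)). In the model S^MC = kα + ζτ, S^TV = kατ⁻¹ + ζ, R = γα + ε, with α, ζ, τ, ε mutually independent, α and ζ and ε mean zero with variances σ_α², σ_ζ², σ_ε² > 0, τ > 0 a.s. with finite moments E[τ²], E[τ⁻¹], E[τ⁻²], and k, γ ≠ 0: SNR(S^MC, R) = k²γ²σ_α⁴ / ((k²σ_α² + σ_ζ²E[τ²])(γ²σ_α² + σ_ε²)) and SNR(S^TV, R) = k²γ²σ_α⁴(E[τ⁻¹])² / ((k²σ_α²E[τ⁻²] + σ_ζ²)(γ²σ_α² + σ_ε²)). -/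

import Mathlib

open MeasureTheory ProbabilityTheory

noncomputable def eE {Ω : Type*} [MeasurableSpace Ω] (μ : Measure Ω) (X : Ω → ℝ) : ℝ :=
  ∫ ω, X ω ∂μ

noncomputable def eCov {Ω : Type*} [MeasurableSpace Ω] (μ : Measure Ω) (X Y : Ω → ℝ) : ℝ :=
  eE μ (fun ω => X ω * Y ω) - eE μ X * eE μ Y

noncomputable def eVar {Ω : Type*} [MeasurableSpace Ω] (μ : Measure Ω) (X : Ω → ℝ) : ℝ :=
  eCov μ X X

noncomputable def eSNR {Ω : Type*} [MeasurableSpace Ω] (μ : Measure Ω) (S R : Ω → ℝ) : ℝ :=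
  (eCov μ S R) ^ 2 / (eVar μ S * eVar μ R)

private lemma l2_mul_int {Ω : Type*} [MeasureSpace Ω] [IsProbabilityMeasure (ℙ : Measure Ω)]
    {f g : Ω → ℝ} (hf : MemLp f 2 ℙ) (hg : MemLp g 2 ℙ) :
    Integrable (fun ω => f ω * g ω) ℙ := by
  have h := hg.smul (φ := f) (r := 1) hf
    (hpqr := ⟨by norm_num [ENNReal.inv_two_add_inv_two]⟩)
  rw [memLp_one_iff_integrable] at h
  exact h

/-- closed-form SNR expressions for the market-cap and trading-value
normalized signals in the matched filter model. -/
theorem stmt_9 {Ω : Type*} [MeasureSpace Ω] [IsProbabilityMeasure (ℙ : Measure Ω)]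
    (α ζ τ ε : Ω → ℝ) (k γ σα σζ σε : ℝ)
    (hαm : Measurable α) (hζm : Measurable ζ) (hτm : Measurable τ) (hεm : Measurable ε)
    (hindep : iIndepFun ![α, ζ, τ, ε] ℙ)
    (hα0 : eE ℙ α = 0) (hζ0 : eE ℙ ζ = 0) (hε0 : eE ℙ ε = 0)
    (hσα : eE ℙ (fun ω => α ω ^ 2) = σα ^ 2) (hσαpos : 0 < σα ^ 2)
    (hσζ : eE ℙ (fun ω => ζ ω ^ 2) = σζ ^ 2) (hσζpos : 0 < σζ ^ 2)
    (hσε : eE ℙ (fun ω => ε ω ^ 2) = σε ^ 2) (hσεpos : 0 < σε ^ 2)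
    (hτpos : ∀ᵐ ω ∂(ℙ : Measure Ω), 0 < τ ω)
    (hτ2 : MemLp τ 2 ℙ)
    (hτinv : Integrable (fun ω => (τ ω)⁻¹) ℙ)
    (hτinv2 : Integrable (fun ω => ((τ ω) ^ 2)⁻¹) ℙ)
    (hα2 : MemLp α 2 ℙ) (hζ2 : MemLp ζ 2 ℙ) (hε2 : MemLp ε 2 ℙ)
    (hζτ2 : MemLp (fun ω => ζ ω * τ ω) 2 ℙ)
    (hατ2 : MemLp (fun ω => α ω * (τ ω)⁻¹) 2 ℙ)
    (hk : k ≠ 0) (hγ : γ ≠ 0) :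
    eSNR ℙ (fun ω => k * α ω + ζ ω * τ ω) (fun ω => γ * α ω + ε ω)
      = k ^ 2 * γ ^ 2 * σα ^ 4 /
        ((k ^ 2 * σα ^ 2 + σζ ^ 2 * eE ℙ (fun ω => τ ω ^ 2)) *
          (γ ^ 2 * σα ^ 2 + σε ^ 2)) ∧
    eSNR ℙ (fun ω => k * α ω * (τ ω)⁻¹ + ζ ω) (fun ω => γ * α ω + ε ω)
      = k ^ 2 * γ ^ 2 * σα ^ 4 * (eE ℙ (fun ω => (τ ω)⁻¹)) ^ 2 /
        ((k ^ 2 * σα ^ 2 * eE ℙ (fun ω => ((τ ω) ^ 2)⁻¹) + σζ ^ 2) *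
          (γ ^ 2 * σα ^ 2 + σε ^ 2)) := by
  simp only [eE] at hα0 hζ0 hε0 hσα hσζ hσε
  -- basic integrability
  have iα : Integrable α ℙ := hα2.integrable one_le_two
  have iζ : Integrable ζ ℙ := hζ2.integrable one_le_two
  have iε : Integrable ε ℙ := hε2.integrable one_le_two
  have iτ : Integrable τ ℙ := hτ2.integrable one_le_two
  have iαα := l2_mul_int hα2 hα2
  have iαε := l2_mul_int hα2 hε2
  have iζτ := l2_mul_int hζ2 hτ2
  have iζτα := l2_mul_int hζτ2 hα2
  have iζτε := l2_mul_int hζτ2 hε2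
  have iζτζτ := l2_mul_int hζτ2 hζτ2
  have iεε := l2_mul_int hε2 hε2
  have iζζ := l2_mul_int hζ2 hζ2
  have iqq := l2_mul_int hατ2 hατ2
  have iqα := l2_mul_int hατ2 hα2
  have iqε := l2_mul_int hατ2 hε2
  have iqζ := l2_mul_int hατ2 hζ2
  have iζα := l2_mul_int hζ2 hα2
  have iζε := l2_mul_int hζ2 hε2
  -- measurability of family
  have hfm : ∀ i, Measurable (![α, ζ, τ, ε] i) := by
    intro i; fin_cases i <;> simpa using ‹_›
  -- pairwise independence
  have Iαζ : IndepFun α ζ ℙ := hindep.indepFun (show (0 : Fin 4) ≠ 1 by decide)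
  have Iατ : IndepFun α τ ℙ := hindep.indepFun (show (0 : Fin 4) ≠ 2 by decide)
  have Iαε : IndepFun α ε ℙ := hindep.indepFun (show (0 : Fin 4) ≠ 3 by decide)
  have Iζτ : IndepFun ζ τ ℙ := hindep.indepFun (show (1 : Fin 4) ≠ 2 by decide)
  have Iζε : IndepFun ζ ε ℙ := hindep.indepFun (show (1 : Fin 4) ≠ 3 by decide)
  -- composed independence
  have Iζτ_α : IndepFun (fun ω => ζ ω * τ ω) α ℙ :=
    (hindep.indepFun_prodMk hfm 1 2 0 (by decide) (by decide)).comp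
      (measurable_fst.mul measurable_snd) measurable_id
  have Iζτ_ε : IndepFun (fun ω => ζ ω * τ ω) ε ℙ :=
    (hindep.indepFun_prodMk hfm 1 2 3 (by decide) (by decide)).comp
      (measurable_fst.mul measurable_snd) measurable_id
  have Iζ2τ2 : IndepFun (fun ω => ζ ω ^ 2) (fun ω => τ ω ^ 2) ℙ :=
    Iζτ.comp (measurable_id.pow_const 2) (measurable_id.pow_const 2)
  have Iα_τinv : IndepFun α (fun ω => (τ ω)⁻¹) ℙ :=
    Iατ.comp measurable_id measurable_inv
  have Iα2_τinv : IndepFun (fun ω => α ω ^ 2) (fun ω => (τ ω)⁻¹) ℙ :=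
    Iατ.comp (measurable_id.pow_const 2) measurable_inv
  have Iα2_τ2inv : IndepFun (fun ω => α ω ^ 2) (fun ω => (τ ω ^ 2)⁻¹) ℙ :=
    Iατ.comp (measurable_id.pow_const 2) ((measurable_id.pow_const 2).inv)
  have Iq_ζ : IndepFun (fun ω => α ω * (τ ω)⁻¹) ζ ℙ :=
    (hindep.indepFun_prodMk hfm 0 2 1 (by decide) (by decide)).comp
      (measurable_fst.mul measurable_snd.inv) measurable_id
  have Iq_ε : IndepFun (fun ω => α ω * (τ ω)⁻¹) ε ℙ :=
    (hindep.indepFun_prodMk hfm 0 2 3 (by decide) (by decide)).comp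
      (measurable_fst.mul measurable_snd.inv) measurable_id
  -- product expectations
  have vαα : ∫ ω, α ω * α ω ∂ℙ = σα ^ 2 := by
    rw [show (fun ω => α ω * α ω) = fun ω => α ω ^ 2 by funext ω; ring]; exact hσα
  have vαε : ∫ ω, α ω * ε ω ∂ℙ = 0 := by
    have h : (∫ ω, α ω * ε ω ∂ℙ) = (∫ ω, α ω ∂ℙ) * ∫ ω, ε ω ∂ℙ :=
      Iαε.integral_mul_eq_mul_integral hαm.aestronglyMeasurable hεm.aestronglyMeasurable
    rw [h, hα0, hε0, mul_zero]
  have vζτ : ∫ ω, ζ ω * τ ω ∂ℙ = 0 := by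
    have h : (∫ ω, ζ ω * τ ω ∂ℙ) = (∫ ω, ζ ω ∂ℙ) * ∫ ω, τ ω ∂ℙ :=
      Iζτ.integral_mul_eq_mul_integral hζm.aestronglyMeasurable hτm.aestronglyMeasurable
    rw [h, hζ0, zero_mul]
  have vζτα : ∫ ω, (ζ ω * τ ω) * α ω ∂ℙ = 0 := by
    have h : (∫ ω, (ζ ω * τ ω) * α ω ∂ℙ) = (∫ ω, ζ ω * τ ω ∂ℙ) * ∫ ω, α ω ∂ℙ :=
      Iζτ_α.integral_mul_eq_mul_integral (hζm.mul hτm).aestronglyMeasurable hαm.aestronglyMeasurable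
    rw [h, hα0, mul_zero]
  have vζτε : ∫ ω, (ζ ω * τ ω) * ε ω ∂ℙ = 0 := by
    have h : (∫ ω, (ζ ω * τ ω) * ε ω ∂ℙ) = (∫ ω, ζ ω * τ ω ∂ℙ) * ∫ ω, ε ω ∂ℙ :=
      Iζτ_ε.integral_mul_eq_mul_integral (hζm.mul hτm).aestronglyMeasurable hεm.aestronglyMeasurable
    rw [h, hε0, mul_zero]
  have vζτ2 : ∫ ω, (ζ ω * τ ω) * (ζ ω * τ ω) ∂ℙ = σζ ^ 2 * ∫ ω, τ ω ^ 2 ∂ℙ := by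
    rw [show (fun ω => (ζ ω * τ ω) * (ζ ω * τ ω)) = fun ω => ζ ω ^ 2 * τ ω ^ 2 by
      funext ω; ring]
    have h : (∫ ω, ζ ω ^ 2 * τ ω ^ 2 ∂ℙ) = (∫ ω, ζ ω ^ 2 ∂ℙ) * ∫ ω, τ ω ^ 2 ∂ℙ :=
      Iζ2τ2.integral_mul_eq_mul_integral ((hζm.pow_const 2).aestronglyMeasurable)
        ((hτm.pow_const 2).aestronglyMeasurable)
    rw [h, hσζ]
  have vεε : ∫ ω, ε ω * ε ω ∂ℙ = σε ^ 2 := by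
    rw [show (fun ω => ε ω * ε ω) = fun ω => ε ω ^ 2 by funext ω; ring]; exact hσε
  have vζζ : ∫ ω, ζ ω * ζ ω ∂ℙ = σζ ^ 2 := by
    rw [show (fun ω => ζ ω * ζ ω) = fun ω => ζ ω ^ 2 by funext ω; ring]; exact hσζ
  have vζα : ∫ ω, ζ ω * α ω ∂ℙ = 0 := by
    have h : (∫ ω, ζ ω * α ω ∂ℙ) = (∫ ω, ζ ω ∂ℙ) * ∫ ω, α ω ∂ℙ :=
      Iαζ.symm.integral_mul_eq_mul_integral hζm.aestronglyMeasurable hαm.aestronglyMeasurable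
    rw [h, hζ0, zero_mul]
  have vζε : ∫ ω, ζ ω * ε ω ∂ℙ = 0 := by
    have h : (∫ ω, ζ ω * ε ω ∂ℙ) = (∫ ω, ζ ω ∂ℙ) * ∫ ω, ε ω ∂ℙ :=
      Iζε.integral_mul_eq_mul_integral hζm.aestronglyMeasurable hεm.aestronglyMeasurable
    rw [h, hζ0, zero_mul]
  have vq : ∫ ω, α ω * (τ ω)⁻¹ ∂ℙ = 0 := by
    have h : (∫ ω, α ω * (τ ω)⁻¹ ∂ℙ) = (∫ ω, α ω ∂ℙ) * ∫ ω, (τ ω)⁻¹ ∂ℙ :=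
      Iα_τinv.integral_mul_eq_mul_integral hαm.aestronglyMeasurable hτm.inv.aestronglyMeasurable
    rw [h, hα0, zero_mul]
  have vqα : ∫ ω, (α ω * (τ ω)⁻¹) * α ω ∂ℙ = σα ^ 2 * ∫ ω, (τ ω)⁻¹ ∂ℙ := by
    rw [show (fun ω => (α ω * (τ ω)⁻¹) * α ω) = fun ω => α ω ^ 2 * (τ ω)⁻¹ by
      funext ω; ring]
    have h : (∫ ω, α ω ^ 2 * (τ ω)⁻¹ ∂ℙ) = (∫ ω, α ω ^ 2 ∂ℙ) * ∫ ω, (τ ω)⁻¹ ∂ℙ :=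
      Iα2_τinv.integral_mul_eq_mul_integral ((hαm.pow_const 2).aestronglyMeasurable)
        hτm.inv.aestronglyMeasurable
    rw [h, hσα]
  have vqq : ∫ ω, (α ω * (τ ω)⁻¹) * (α ω * (τ ω)⁻¹) ∂ℙ
      = σα ^ 2 * ∫ ω, (τ ω ^ 2)⁻¹ ∂ℙ := by
    rw [show (fun ω => (α ω * (τ ω)⁻¹) * (α ω * (τ ω)⁻¹))
        = fun ω => α ω ^ 2 * (τ ω ^ 2)⁻¹ by
      funext ω; rw [pow_two, pow_two, mul_inv]; ring]
    have h : (∫ ω, α ω ^ 2 * (τ ω ^ 2)⁻¹ ∂ℙ) = (∫ ω, α ω ^ 2 ∂ℙ) * ∫ ω, (τ ω ^ 2)⁻¹ ∂ℙ :=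
      Iα2_τ2inv.integral_mul_eq_mul_integral ((hαm.pow_const 2).aestronglyMeasurable)
        ((hτm.pow_const 2).inv.aestronglyMeasurable)
    rw [h, hσα]
  have vqζ : ∫ ω, (α ω * (τ ω)⁻¹) * ζ ω ∂ℙ = 0 := by
    have h : (∫ ω, (α ω * (τ ω)⁻¹) * ζ ω ∂ℙ) = (∫ ω, α ω * (τ ω)⁻¹ ∂ℙ) * ∫ ω, ζ ω ∂ℙ :=
      Iq_ζ.integral_mul_eq_mul_integral (hαm.mul hτm.inv).aestronglyMeasurable
        hζm.aestronglyMeasurable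
    rw [h, hζ0, mul_zero]
  have vqε : ∫ ω, (α ω * (τ ω)⁻¹) * ε ω ∂ℙ = 0 := by
    have h : (∫ ω, (α ω * (τ ω)⁻¹) * ε ω ∂ℙ) = (∫ ω, α ω * (τ ω)⁻¹ ∂ℙ) * ∫ ω, ε ω ∂ℙ :=
      Iq_ε.integral_mul_eq_mul_integral (hαm.mul hτm.inv).aestronglyMeasurable
        hεm.aestronglyMeasurable
    rw [h, hε0, mul_zero]
  -- means of the composite signals
  have hS0 : ∫ ω, (k * α ω + ζ ω * τ ω) ∂ℙ = 0 := by
    rw [integral_add (iα.const_mul k) iζτ, integral_const_mul, hα0, vζτ]; ring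
  have hR0 : ∫ ω, (γ * α ω + ε ω) ∂ℙ = 0 := by
    rw [integral_add (iα.const_mul γ) iε, integral_const_mul, hα0, hε0]; ring
  have iq : Integrable (fun ω => α ω * (τ ω)⁻¹) ℙ := hατ2.integrable one_le_two
  have hT0 : ∫ ω, (k * α ω * (τ ω)⁻¹ + ζ ω) ∂ℙ = 0 := by
    rw [show (fun ω => k * α ω * (τ ω)⁻¹ + ζ ω)
        = fun ω => k * (α ω * (τ ω)⁻¹) + ζ ω by funext ω; ring,
      integral_add (iq.const_mul k) iζ, integral_const_mul, vq, hζ0]; ring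
  -- second moments and cross moments of the composite signals
  have hSR : ∫ ω, (k * α ω + ζ ω * τ ω) * (γ * α ω + ε ω) ∂ℙ = k * γ * σα ^ 2 := by
    rw [show (fun ω => (k * α ω + ζ ω * τ ω) * (γ * α ω + ε ω))
        = fun ω => k * γ * (α ω * α ω) + (k * (α ω * ε ω)
            + (γ * ((ζ ω * τ ω) * α ω) + (ζ ω * τ ω) * ε ω)) by funext ω; ring,
      integral_add (iαα.const_mul _)
        (show Integrable (fun ω => k * (α ω * ε ω)
            + (γ * ((ζ ω * τ ω) * α ω) + (ζ ω * τ ω) * ε ω)) ℙ from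
          (iαε.const_mul _).add ((iζτα.const_mul _).add iζτε)),
      integral_add (iαε.const_mul _)
        (show Integrable (fun ω => γ * ((ζ ω * τ ω) * α ω) + (ζ ω * τ ω) * ε ω) ℙ from
          (iζτα.const_mul _).add iζτε),
      integral_add (iζτα.const_mul _) iζτε,
      integral_const_mul, integral_const_mul, integral_const_mul, vαα, vαε, vζτα, vζτε]
    ring
  have hSS : ∫ ω, (k * α ω + ζ ω * τ ω) * (k * α ω + ζ ω * τ ω) ∂ℙ
      = k ^ 2 * σα ^ 2 + σζ ^ 2 * ∫ ω, τ ω ^ 2 ∂ℙ := by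
    rw [show (fun ω => (k * α ω + ζ ω * τ ω) * (k * α ω + ζ ω * τ ω))
        = fun ω => (k * k) * (α ω * α ω) + ((2 * k) * ((ζ ω * τ ω) * α ω)
            + (ζ ω * τ ω) * (ζ ω * τ ω)) by funext ω; ring,
      integral_add (iαα.const_mul _)
        (show Integrable (fun ω => (2 * k) * ((ζ ω * τ ω) * α ω)
            + (ζ ω * τ ω) * (ζ ω * τ ω)) ℙ from (iζτα.const_mul _).add iζτζτ),
      integral_add (iζτα.const_mul _) iζτζτ,
      integral_const_mul, integral_const_mul, vαα, vζτα, vζτ2]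
    ring
  have hRR : ∫ ω, (γ * α ω + ε ω) * (γ * α ω + ε ω) ∂ℙ
      = γ ^ 2 * σα ^ 2 + σε ^ 2 := by
    rw [show (fun ω => (γ * α ω + ε ω) * (γ * α ω + ε ω))
        = fun ω => (γ * γ) * (α ω * α ω) + ((2 * γ) * (α ω * ε ω) + ε ω * ε ω) by
          funext ω; ring,
      integral_add (iαα.const_mul _)
        (show Integrable (fun ω => (2 * γ) * (α ω * ε ω) + ε ω * ε ω) ℙ from
          (iαε.const_mul _).add iεε),
      integral_add (iαε.const_mul _) iεε,
      integral_const_mul, integral_const_mul, vαα, vαε, vεε]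
    ring
  have hTR : ∫ ω, (k * α ω * (τ ω)⁻¹ + ζ ω) * (γ * α ω + ε ω) ∂ℙ
      = k * γ * σα ^ 2 * ∫ ω, (τ ω)⁻¹ ∂ℙ := by
    rw [show (fun ω => (k * α ω * (τ ω)⁻¹ + ζ ω) * (γ * α ω + ε ω))
        = fun ω => (k * γ) * ((α ω * (τ ω)⁻¹) * α ω) + (k * ((α ω * (τ ω)⁻¹) * ε ω)
            + (γ * (ζ ω * α ω) + ζ ω * ε ω)) by funext ω; ring,
      integral_add (iqα.const_mul _)
        (show Integrable (fun ω => k * ((α ω * (τ ω)⁻¹) * ε ω)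
            + (γ * (ζ ω * α ω) + ζ ω * ε ω)) ℙ from
          (iqε.const_mul _).add ((iζα.const_mul _).add iζε)),
      integral_add (iqε.const_mul _)
        (show Integrable (fun ω => γ * (ζ ω * α ω) + ζ ω * ε ω) ℙ from
          (iζα.const_mul _).add iζε),
      integral_add (iζα.const_mul _) iζε,
      integral_const_mul, integral_const_mul, integral_const_mul, vqα, vqε, vζα, vζε]
    ring
  have hTT : ∫ ω, (k * α ω * (τ ω)⁻¹ + ζ ω) * (k * α ω * (τ ω)⁻¹ + ζ ω) ∂ℙ
      = k ^ 2 * σα ^ 2 * (∫ ω, (τ ω ^ 2)⁻¹ ∂ℙ) + σζ ^ 2 := by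
    rw [show (fun ω => (k * α ω * (τ ω)⁻¹ + ζ ω) * (k * α ω * (τ ω)⁻¹ + ζ ω))
        = fun ω => (k * k) * ((α ω * (τ ω)⁻¹) * (α ω * (τ ω)⁻¹))
            + ((2 * k) * ((α ω * (τ ω)⁻¹) * ζ ω) + ζ ω * ζ ω) by funext ω; ring,
      integral_add (iqq.const_mul _)
        (show Integrable (fun ω => (2 * k) * ((α ω * (τ ω)⁻¹) * ζ ω) + ζ ω * ζ ω) ℙ from
          (iqζ.const_mul _).add iζζ),
      integral_add (iqζ.const_mul _) iζζ,
      integral_const_mul, integral_const_mul, vqq, vqζ, vζζ]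
    ring
  constructor
  · simp only [eSNR, eVar, eCov, eE]
    rw [hSR, hS0, hR0, hSS, hRR]
    ring
  · simp only [eSNR, eVar, eCov, eE]
    rw [hTR, hT0, hR0, hTT, hRR]
    ring
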